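/- arXiv:2211.04721 — 2 statements merged into one kernel-verified Lean document; each statement's English description precedes it below -/
import Mathlib

section
/- Let a, b ∈ (0,1), n ≥ 1, and let r_0 = 0 ≤ r_1 ≤ … ≤ r_n be integers with r_n ≥ 1. Let ĝ and g̊ be the piecewise linear functions on [0,1] with nodes ĝ(k/n) = (r_k − (k/n)^a r_n)/√r_n and g̊(k/n) = (r_k − (k/n)^b r_n)/√r_n, 0 ≤ k ≤ n, interpolated linearly between consecutive points k/n. Then sup_{t ∈ [0,1]} |ĝ(t) − g̊(t) + √r_n·(t^a − t^b)| ≤ 2√r_n·(n^{−a} + n^{−b}). -/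
open Filter Real Topology

noncomputable section

/-- Piecewise-linear interpolation of the nodes `v k` placed at the points `k/n`:
for `t = k/n + u`, `0 ≤ u < 1/n`, the value is `v k + n u (v (k+1) - v k)`. -/
def pwl (n : ℕ) (v : ℕ → ℝ) (t : ℝ) : ℝ :=
  v ⌊(n : ℝ) * t⌋₊ + ((n : ℝ) * t - ⌊(n : ℝ) * t⌋₊) * (v (⌊(n : ℝ) * t⌋₊ + 1) - v ⌊(n : ℝ) * t⌋₊)

lemma rpow_add_one_le (c : ℝ) (hc0 : 0 ≤ c) (hc1 : c ≤ 1) (x : ℝ) (hx : 0 ≤ x) :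
    (x + 1) ^ c ≤ x ^ c + 1 := by
  have h := NNReal.rpow_add_le_add_rpow (x.toNNReal) 1 hc0 hc1
  have h2 := NNReal.coe_le_coe.mpr h
  push_cast [NNReal.coe_rpow] at h2
  rw [Real.one_rpow] at h2; rwa [Real.coe_toNNReal x hx] at h2

/-- On an interval `[k/n, (k+1)/n]`, two values of `x ↦ x^c` differ by at most `n^(-c)`. -/
lemma rpow_osc (c : ℝ) (hc : c ∈ Set.Ioo (0 : ℝ) 1) (n k : ℕ) (hn : 1 ≤ n) (x y : ℝ)
    (hx : x ∈ Set.Icc ((k : ℝ) / n) (((k : ℝ) + 1) / n))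
    (hy : y ∈ Set.Icc ((k : ℝ) / n) (((k : ℝ) + 1) / n)) :
    |x ^ c - y ^ c| ≤ (n : ℝ) ^ (-c) := by
  have hnpos : (0 : ℝ) < n := by exact_mod_cast hn
  have hk0 : (0 : ℝ) ≤ (k : ℝ) / n := by positivity
  have hlo : ∀ z : ℝ, z ∈ Set.Icc ((k : ℝ) / n) (((k : ℝ) + 1) / n) →
      ((k : ℝ) / n) ^ c ≤ z ^ c ∧ z ^ c ≤ (((k : ℝ) + 1) / n) ^ c := by
    intro z hz
    exact ⟨Real.rpow_le_rpow hk0 hz.1 hc.1.le,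
      Real.rpow_le_rpow (le_trans hk0 hz.1) hz.2 hc.1.le⟩
  have h1 := hlo x hx
  have h2 := hlo y hy
  have hdiff : (((k : ℝ) + 1) / n) ^ c - ((k : ℝ) / n) ^ c ≤ (n : ℝ) ^ (-c) := by
    rw [Real.div_rpow (by positivity) hnpos.le, Real.div_rpow (by positivity) hnpos.le,
      Real.rpow_neg hnpos.le]
    have hstep : ((k : ℝ) + 1) ^ c ≤ (k : ℝ) ^ c + 1 :=
      rpow_add_one_le c hc.1.le hc.2.le _ (by positivity)
    have hnc : (0 : ℝ) < (n : ℝ) ^ c := Real.rpow_pos_of_pos hnpos c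
    rw [div_sub_div_same, div_le_iff₀ hnc]
    have hinv : ((n : ℝ) ^ c)⁻¹ * (n : ℝ) ^ c = 1 := inv_mul_cancel₀ hnc.ne'
    rw [hinv]
    linarith
  rw [abs_sub_le_iff]
  constructor <;> linarith [h1.1, h1.2, h2.1, h2.2]

/-- for `a, b ∈ (0,1)`, `n ≥ 1` and integers `r 0 = 0 ≤ r 1 ≤ … ≤ r n` with
`r n ≥ 1`, the piecewise linear functions `ĝ` (nodes `(r k - (k/n)^a r n)/√(r n)`) and `g̊`
(nodes `(r k - (k/n)^b r n)/√(r n)`) satisfy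
`sup_{t∈[0,1]} |ĝ(t) - g̊(t) + √(r n)(t^a - t^b)| ≤ 2√(r n)(n^{-a} + n^{-b})`. -/
theorem statement9
    (a b : ℝ) (ha : a ∈ Set.Ioo (0 : ℝ) 1) (hb : b ∈ Set.Ioo (0 : ℝ) 1)
    (n : ℕ) (hn : 1 ≤ n)
    (r : ℕ → ℕ) (hr0 : r 0 = 0)
    (hmono : ∀ k < n, r k ≤ r (k + 1))
    (hrn : 1 ≤ r n)
    (ghat gcirc : ℝ → ℝ)
    (hghat : ghat = pwl n fun k =>
      ((r k : ℝ) - ((k : ℝ) / (n : ℝ)) ^ a * (r n : ℝ)) / Real.sqrt (r n))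
    (hgcirc : gcirc = pwl n fun k =>
      ((r k : ℝ) - ((k : ℝ) / (n : ℝ)) ^ b * (r n : ℝ)) / Real.sqrt (r n)) :
    ⨆ t : Set.Icc (0 : ℝ) 1,
        |ghat t - gcirc t + Real.sqrt (r n) * ((t : ℝ) ^ a - (t : ℝ) ^ b)| ≤
      2 * Real.sqrt (r n) * ((n : ℝ) ^ (-a) + (n : ℝ) ^ (-b)) := by
  have hnpos : (0 : ℝ) < n := by exact_mod_cast hn
  have hrnpos : (0 : ℝ) < (r n : ℝ) := by exact_mod_cast hrn
  set s : ℝ := Real.sqrt (r n) with hs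
  have hspos : 0 < s := Real.sqrt_pos.mpr hrnpos
  have hs2 : s * s = (r n : ℝ) := Real.mul_self_sqrt hrnpos.le
  set M : ℝ := (n : ℝ) ^ (-a) + (n : ℝ) ^ (-b) with hMdef
  have hM0 : 0 ≤ M := by positivity
  haveI : Nonempty (Set.Icc (0 : ℝ) 1) := ⟨⟨0, by norm_num⟩⟩
  apply ciSup_le
  rintro ⟨t, ht0, ht1⟩
  simp only
  set k : ℕ := ⌊(n : ℝ) * t⌋₊ with hk
  set u : ℝ := (n : ℝ) * t - k with hu
  have hnt0 : 0 ≤ (n : ℝ) * t := by positivity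
  have hfl := Nat.floor_le hnt0
  have hfl2 := (Nat.lt_floor_add_one ((n : ℝ) * t)).le
  have hu0 : 0 ≤ u := by simp only [hu]; linarith
  have hu1 : u ≤ 1 := by simp only [hu]; push_cast at hfl2 ⊢; linarith
  have htmem : t ∈ Set.Icc ((k : ℝ) / n) (((k : ℝ) + 1) / n) := by
    constructor
    · rw [div_le_iff₀ hnpos]; linarith
    · rw [le_div_iff₀ hnpos]; push_cast at hfl2; linarith
  have hk1mem : (k : ℝ) / n ∈ Set.Icc ((k : ℝ) / n) (((k : ℝ) + 1) / n) :=
    ⟨le_refl _, by gcongr; linarith⟩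
  have hk2mem : ((k : ℝ) + 1) / n ∈ Set.Icc ((k : ℝ) / n) (((k : ℝ) + 1) / n) :=
    ⟨by gcongr; linarith, le_refl _⟩
  have oa1 := rpow_osc a ha n k hn ((k : ℝ) / n) t hk1mem htmem
  have ob1 := rpow_osc b hb n k hn ((k : ℝ) / n) t hk1mem htmem
  have oa2 := rpow_osc a ha n k hn (((k : ℝ) + 1) / n) t hk2mem htmem
  have ob2 := rpow_osc b hb n k hn (((k : ℝ) + 1) / n) t hk2mem htmem
  set X : ℝ := (((k : ℝ) / n) ^ b - ((k : ℝ) / n) ^ a) - (t ^ b - t ^ a) with hX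
  set Y : ℝ := ((((k : ℝ) + 1) / n) ^ b - (((k : ℝ) + 1) / n) ^ a) - (t ^ b - t ^ a) with hY
  have key : ghat t - gcirc t + s * (t ^ a - t ^ b) = s * ((1 - u) * X + u * Y) := by
    rw [hghat, hgcirc]
    unfold pwl
    rw [← hk]
    push_cast
    rw [hX, hY, ← hs2]
    have hsne : s ≠ 0 := hspos.ne'
    field_simp
    ring
  have hXb : |X| ≤ M := by
    have : |X| ≤ |((k : ℝ) / n) ^ a - t ^ a| + |((k : ℝ) / n) ^ b - t ^ b| := by
      rw [hX]
      calc |(((k : ℝ) / n) ^ b - ((k : ℝ) / n) ^ a) - (t ^ b - t ^ a)|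
          = |(((k : ℝ) / n) ^ b - t ^ b) + -(((k : ℝ) / n) ^ a - t ^ a)| := by ring_nf
        _ ≤ |((k : ℝ) / n) ^ b - t ^ b| + |-(((k : ℝ) / n) ^ a - t ^ a)| := abs_add_le _ _
        _ = |((k : ℝ) / n) ^ a - t ^ a| + |((k : ℝ) / n) ^ b - t ^ b| := by
            rw [abs_neg]; ring
    rw [hMdef]; linarith
  have hYb : |Y| ≤ M := by
    have : |Y| ≤ |(((k : ℝ) + 1) / n) ^ a - t ^ a| + |(((k : ℝ) + 1) / n) ^ b - t ^ b| := by
      rw [hY]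
      calc |((((k : ℝ) + 1) / n) ^ b - (((k : ℝ) + 1) / n) ^ a) - (t ^ b - t ^ a)|
          = |((((k : ℝ) + 1) / n) ^ b - t ^ b) + -((((k : ℝ) + 1) / n) ^ a - t ^ a)| := by ring_nf
        _ ≤ |(((k : ℝ) + 1) / n) ^ b - t ^ b| + |-((((k : ℝ) + 1) / n) ^ a - t ^ a)| := abs_add_le _ _
        _ = |(((k : ℝ) + 1) / n) ^ a - t ^ a| + |(((k : ℝ) + 1) / n) ^ b - t ^ b| := by
            rw [abs_neg]; ring
    rw [hMdef]; linarith
  have hinner : |(1 - u) * X + u * Y| ≤ M := by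
    calc |(1 - u) * X + u * Y| ≤ |(1 - u) * X| + |u * Y| := abs_add_le _ _
      _ = (1 - u) * |X| + u * |Y| := by
          rw [abs_mul, abs_mul, abs_of_nonneg (by linarith : (0:ℝ) ≤ 1 - u), abs_of_nonneg hu0]
      _ ≤ (1 - u) * M + u * M :=
          add_le_add (mul_le_mul_of_nonneg_left hXb (by linarith))
            (mul_le_mul_of_nonneg_left hYb hu0)
      _ = M := by ring
  rw [key, abs_mul, abs_of_nonneg hspos.le]
  nlinarith [mul_nonneg hspos.le hM0, abs_nonneg ((1 - u) * X + u * Y)]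
end
end

section
/- Let (p_k)_{k≥1} be nonnegative with Σ_k p_k = 1, let n > 0 and t, τ ∈ [0,1] with t + τ > 1. Let ((X_k, Y_k, Z_k))_{k≥1} be mutually independent triples of independent Poisson random variables, with X_k of mean p_k(1−τ)n, Y_k of mean p_k(t+τ−1)n, and Z_k of mean p_k(1−t)n. Set R = Σ_k 1(X_k + Y_k ≥ 1) and R' = Σ_k 1(Y_k + Z_k ≥ 1) (both sums converge a.s. and in L²). Then Cov(R, R') = Σ_k (e^{−p_k n} − e^{−p_k(t+τ)n}) = Φ((t+τ)n) − Φ(n), where Φ(x) = Σ_k (1 − e^{−p_k x}). -/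
/-!
`R` and `R'` count the events `S k = {X_k + Y_k ≥ 1}` and `T k = {Y_k + Z_k ≥ 1}`. Events
attached to different urns are independent, so in `E[R R'] = ∑_{j,k} P(S j ∩ T k)` every
off-diagonal term is `P(S j) P(T k)` and the covariance collapses to the diagonal
`∑_k Cov(1_{S k}, 1_{T k})`. Indicators of events covary like the indicators of their
complements, so the `k`-th term is `P(X_k = Y_k = Z_k = 0) - P(X_k = Y_k = 0) P(Y_k = Z_k = 0)
= e^{-p_k n} - e^{-p_k t n} e^{-p_k τ n}`. The double series are handled in `ℝ≥0∞`, where they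
can be rearranged freely; `∑_k P(S k) ≤ t n ∑_k p_k < ∞` makes everything finite.
-/

open MeasureTheory ProbabilityTheory Filter Real
open scoped NNReal

noncomputable section

/-- `Φ(x) = ∑_k (1 - e^{-p_k x})`, the expected number of non-empty urns in the
Poissonized model at time `x`. -/
def Phi (p : ℕ → ℝ) (x : ℝ) : ℝ := ∑' k : ℕ, (1 - Real.exp (-(p k * x)))

open scoped ENNReal

section EventCount

variable {Ω : Type*} {S T : ℕ → Set Ω}

def eventCount (S : ℕ → Set Ω) (ω : Ω) : ℝ≥0∞ := ∑' k, (S k).indicator 1 ω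

lemma toReal_indicator_one (s : Set Ω) (ω : Ω) :
    (s.indicator (1 : Ω → ℝ≥0∞) ω).toReal = s.indicator 1 ω := by
  by_cases h : ω ∈ s <;> simp [h]

lemma toReal_eventCount (S : ℕ → Set Ω) (ω : Ω) :
    (eventCount S ω).toReal = ∑' k, (S k).indicator 1 ω := by
  rw [eventCount, ENNReal.tsum_toReal_eq fun k => by by_cases h : ω ∈ S k <;> simp [h]]
  simp_rw [toReal_indicator_one]

variable [MeasurableSpace Ω] {P : Measure Ω}

lemma measurable_eventCount (hS : ∀ k, MeasurableSet (S k)) : Measurable (eventCount S) :=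
  Measurable.tsum fun k => measurable_one.indicator (hS k)

lemma lintegral_eventCount (hS : ∀ k, MeasurableSet (S k)) :
    ∫⁻ ω, eventCount S ω ∂P = ∑' k, P (S k) := by
  simp_rw [eventCount]
  rw [lintegral_tsum fun k => (measurable_one.indicator (hS k)).aemeasurable]
  exact tsum_congr fun k => lintegral_indicator_one (hS k)

lemma lintegral_eventCount_mul (hS : ∀ k, MeasurableSet (S k)) (hT : ∀ k, MeasurableSet (T k)) :
    ∫⁻ ω, eventCount S ω * eventCount T ω ∂P = ∑' j, ∑' k, P (S j ∩ T k) := by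
  have hprod : ∀ ω, eventCount S ω * eventCount T ω
      = ∑' j, ∑' k, (S j ∩ T k).indicator 1 ω := fun ω => by
    simp_rw [eventCount, ← ENNReal.tsum_mul_right, ← ENNReal.tsum_mul_left,
      Set.inter_indicator_one]
    rfl
  have hmeas : ∀ j k, Measurable ((S j ∩ T k).indicator (1 : Ω → ℝ≥0∞)) := fun j k =>
    measurable_one.indicator ((hS j).inter (hT k))
  simp_rw [hprod]
  rw [lintegral_tsum fun j => (Measurable.tsum (hmeas j)).aemeasurable]
  refine tsum_congr fun j => ?_
  rw [lintegral_tsum fun k => (hmeas j k).aemeasurable]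
  exact tsum_congr fun k => lintegral_indicator_one ((hS j).inter (hT k))

-- Both sides are moved so that no subtraction occurs in `ℝ≥0∞`.
lemma tsum_measure_inter_add_measure_mul (j : ℕ)
    (hind : ∀ k, j ≠ k → P (S j ∩ T k) = P (S j) * P (T k)) :
    ∑' k, P (S j ∩ T k) + P (S j) * P (T j) = P (S j) * ∑' k, P (T k) + P (S j ∩ T j) := by
  have hoff : (∑' k, if k = j then 0 else P (S j ∩ T k))
      = P (S j) * ∑' k, if k = j then 0 else P (T k) := by
    rw [← ENNReal.tsum_mul_left]
    refine tsum_congr fun k => ?_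
    split_ifs with h
    · simp
    · exact hind k (Ne.symm h)
  rw [ENNReal.summable.tsum_eq_add_tsum_ite' j,
    ENNReal.summable.tsum_eq_add_tsum_ite' (f := fun k => P (T k)) j, hoff]
  ring

lemma lintegral_eventCount_mul_add (hS : ∀ k, MeasurableSet (S k))
    (hT : ∀ k, MeasurableSet (T k)) (hind : ∀ j k, j ≠ k → P (S j ∩ T k) = P (S j) * P (T k)) :
    ∫⁻ ω, eventCount S ω * eventCount T ω ∂P + ∑' k, P (S k) * P (T k)
      = (∑' k, P (S k)) * (∑' k, P (T k)) + ∑' k, P (S k ∩ T k) := by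
  rw [lintegral_eventCount_mul hS hT, ← ENNReal.tsum_add,
    tsum_congr fun j => tsum_measure_inter_add_measure_mul j (hind j), ENNReal.tsum_add,
    ENNReal.tsum_mul_right]

lemma ae_summable_indicator (hS : ∀ k, MeasurableSet (S k)) (hfS : ∑' k, P (S k) ≠ ∞) :
    ∀ᵐ ω ∂P, Summable fun k => (S k).indicator (1 : Ω → ℝ) ω := by
  have hfin : ∫⁻ ω, eventCount S ω ∂P ≠ ∞ := by rwa [lintegral_eventCount hS]
  filter_upwards [ae_lt_top (measurable_eventCount hS) hfin] with ω hω
  simpa [toReal_indicator_one] using ENNReal.summable_toReal hω.ne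

lemma integral_tsum_indicator (hS : ∀ k, MeasurableSet (S k)) (hfS : ∑' k, P (S k) ≠ ∞) :
    ∫ ω, ∑' k, (S k).indicator (1 : Ω → ℝ) ω ∂P = ∑' k, P.real (S k) := by
  have hfin : ∫⁻ ω, eventCount S ω ∂P ≠ ∞ := by rwa [lintegral_eventCount hS]
  simp_rw [← toReal_eventCount]
  rw [integral_toReal (measurable_eventCount hS).aemeasurable
      (ae_lt_top (measurable_eventCount hS) hfin), lintegral_eventCount hS,
    ENNReal.tsum_toReal_eq (ENNReal.ne_top_of_tsum_ne_top hfS)]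
  rfl

lemma integral_tsum_indicator_mul (hS : ∀ k, MeasurableSet (S k)) (hT : ∀ k, MeasurableSet (T k))
    (hfin : ∫⁻ ω, eventCount S ω * eventCount T ω ∂P ≠ ∞) :
    ∫ ω, (∑' k, (S k).indicator (1 : Ω → ℝ) ω) * ∑' k, (T k).indicator (1 : Ω → ℝ) ω ∂P
      = (∫⁻ ω, eventCount S ω * eventCount T ω ∂P).toReal := by
  have hmeas := (measurable_eventCount hS).mul (measurable_eventCount hT)
  simp_rw [← toReal_eventCount, ← ENNReal.toReal_mul]
  exact integral_toReal hmeas.aemeasurable (ae_lt_top hmeas hfin)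

lemma lintegral_eventCount_mul_add_ne_top (hS : ∀ k, MeasurableSet (S k))
    (hT : ∀ k, MeasurableSet (T k)) (hfS : ∑' k, P (S k) ≠ ∞) (hfT : ∑' k, P (T k) ≠ ∞)
    (hind : ∀ j k, j ≠ k → P (S j ∩ T k) = P (S j) * P (T k)) :
    ∫⁻ ω, eventCount S ω * eventCount T ω ∂P + ∑' k, P (S k) * P (T k) ≠ ∞ := by
  rw [lintegral_eventCount_mul_add hS hT hind]
  refine ENNReal.add_ne_top.2 ⟨ENNReal.mul_ne_top hfS hfT, ne_top_of_le_ne_top hfS ?_⟩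
  exact ENNReal.tsum_le_tsum fun k => measure_mono Set.inter_subset_left

lemma memLp_two_tsum_indicator (hS : ∀ k, MeasurableSet (S k)) (hfS : ∑' k, P (S k) ≠ ∞)
    (hind : ∀ j k, j ≠ k → P (S j ∩ S k) = P (S j) * P (S k)) :
    MemLp (fun ω => ∑' k, (S k).indicator (1 : Ω → ℝ) ω) 2 P := by
  have hmeas := measurable_eventCount hS
  have hfin := (ENNReal.add_ne_top.1 (lintegral_eventCount_mul_add_ne_top hS hS hfS hfS hind)).1
  simp_rw [← toReal_eventCount]
  rw [memLp_two_iff_integrable_sq hmeas.ennreal_toReal.aestronglyMeasurable]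
  simp_rw [sq, ← ENNReal.toReal_mul]
  exact integrable_toReal_of_lintegral_ne_top (hmeas.mul hmeas).aemeasurable hfin

theorem integral_tsum_indicator_mul_sub_mul (hS : ∀ k, MeasurableSet (S k))
    (hT : ∀ k, MeasurableSet (T k)) (hfS : ∑' k, P (S k) ≠ ∞) (hfT : ∑' k, P (T k) ≠ ∞)
    (hind : ∀ j k, j ≠ k → P (S j ∩ T k) = P (S j) * P (T k)) :
    (∫ ω, (∑' k, (S k).indicator (1 : Ω → ℝ) ω) * ∑' k, (T k).indicator (1 : Ω → ℝ) ω ∂P)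
        - (∫ ω, ∑' k, (S k).indicator (1 : Ω → ℝ) ω ∂P)
          * ∫ ω, ∑' k, (T k).indicator (1 : Ω → ℝ) ω ∂P
      = ∑' k, (P.real (S k ∩ T k) - P.real (S k) * P.real (T k)) := by
  have key := lintegral_eventCount_mul_add hS hT hind
  obtain ⟨hI, hprod⟩ :=
    ENNReal.add_ne_top.1 (lintegral_eventCount_mul_add_ne_top hS hT hfS hfT hind)
  have hdiag : ∑' k, P (S k ∩ T k) ≠ ∞ :=
    ne_top_of_le_ne_top hfS (ENNReal.tsum_le_tsum fun k => measure_mono Set.inter_subset_left)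
  have hsum_diag : Summable fun k => P.real (S k ∩ T k) := ENNReal.summable_toReal hdiag
  have hsum_prod : Summable fun k => P.real (S k) * P.real (T k) := by
    simpa [measureReal_def] using ENNReal.summable_toReal hprod
  replace key := congrArg ENNReal.toReal key
  rw [ENNReal.toReal_add hI hprod, ENNReal.toReal_add (ENNReal.mul_ne_top hfS hfT) hdiag,
    ENNReal.toReal_mul, ENNReal.tsum_toReal_eq (ENNReal.ne_top_of_tsum_ne_top hprod),
    ENNReal.tsum_toReal_eq (ENNReal.ne_top_of_tsum_ne_top hfS),
    ENNReal.tsum_toReal_eq (ENNReal.ne_top_of_tsum_ne_top hfT),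
    ENNReal.tsum_toReal_eq (ENNReal.ne_top_of_tsum_ne_top hdiag)] at key
  simp only [ENNReal.toReal_mul, ← measureReal_def] at key
  rw [integral_tsum_indicator_mul hS hT hI, integral_tsum_indicator hS hfS,
    integral_tsum_indicator hT hfT, hsum_diag.tsum_sub hsum_prod]
  linarith

lemma tsum_measure_ne_top_of_summable [IsFiniteMeasure P] (h : Summable fun k => P.real (S k)) :
    ∑' k, P (S k) ≠ ∞ := by
  rw [tsum_congr fun k => (ofReal_measureReal (μ := P) (s := S k)).symm,
    ← ENNReal.ofReal_tsum_of_nonneg (fun _ => measureReal_nonneg) h]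
  exact ENNReal.ofReal_ne_top

end EventCount

lemma measureReal_compl_inter_compl_sub_mul {Ω : Type*} [MeasurableSpace Ω] {P : Measure Ω}
    [IsProbabilityMeasure P] {A B : Set Ω} (hA : MeasurableSet A) (hB : MeasurableSet B) :
    P.real (Aᶜ ∩ Bᶜ) - P.real Aᶜ * P.real Bᶜ = P.real (A ∩ B) - P.real A * P.real B := by
  rw [← Set.compl_union, probReal_compl_eq_one_sub (hA.union hB), probReal_compl_eq_one_sub hA,
    probReal_compl_eq_one_sub hB]
  linear_combination -measureReal_union_add_inter (μ := P) (s := A) hB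

section PoissonCells

variable {Ω ι : Type*} {W : ι → Ω → ℕ}

def occupied (W : ι → Ω → ℕ) (s : Finset ι) : Set Ω := {ω | 1 ≤ ∑ i ∈ s, W i ω}

lemma compl_occupied (W : ι → Ω → ℕ) (s : Finset ι) :
    (occupied W s)ᶜ = ⋂ i ∈ s, W i ⁻¹' {0} := by
  ext ω
  simp [occupied, Finset.sum_eq_zero_iff]

lemma indicator_occupied_pair [DecidableEq ι] {i j : ι} (hij : i ≠ j) (ω : Ω) :
    (occupied W {i, j}).indicator (1 : Ω → ℝ) ω = if 1 ≤ W i ω + W j ω then 1 else 0 := by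
  simp [occupied, Set.indicator_apply, Finset.sum_pair hij]

variable [MeasurableSpace Ω] {P : Measure Ω}

lemma measurableSet_occupied (hmeas : ∀ i, Measurable (W i)) (s : Finset ι) :
    MeasurableSet (occupied W s) := by
  rw [← compl_compl (occupied W s), compl_occupied]
  exact (s.measurableSet_biInter fun i _ => hmeas i (measurableSet_singleton 0)).compl

lemma measure_occupied_inter_of_disjoint (hmeas : ∀ i, Measurable (W i)) (hindep : iIndepFun W P)
    {s t : Finset ι} (hst : Disjoint s t) :
    P (occupied W s ∩ occupied W t) = P (occupied W s) * P (occupied W t) := by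
  have hpre (u : Finset ι) :
      occupied W u = (fun ω (i : u) => W i ω) ⁻¹' {x | 1 ≤ ∑ i, x i} := by
    ext ω
    exact iff_of_eq (congrArg (1 ≤ ·) (Finset.sum_coe_sort u (W · ω)).symm)
  rw [hpre s, hpre t]
  exact (hindep.indepFun_finset s t hst hmeas).measure_inter_preimage_eq_mul _ _
    (Set.to_countable _).measurableSet (Set.to_countable _).measurableSet

lemma measure_occupied_pair_inter_of_ne {κ : Type*} [DecidableEq κ] {W : ℕ × κ → Ω → ℕ}
    (hmeas : ∀ i, Measurable (W i)) (hindep : iIndepFun W P) (a b c d : κ) (j k : ℕ)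
    (hjk : j ≠ k) :
    P (occupied W {(j, a), (j, b)} ∩ occupied W {(k, c), (k, d)})
      = P (occupied W {(j, a), (j, b)}) * P (occupied W {(k, c), (k, d)}) :=
  measure_occupied_inter_of_disjoint hmeas hindep (by simp [hjk.symm])

lemma measureReal_preimage_zero_of_map_eq_poissonMeasure {V : Ω → ℕ} (hV : Measurable V)
    {r : ℝ≥0} (h : P.map V = poissonMeasure r) : P.real (V ⁻¹' {0}) = exp (-r) := by
  rw [← map_measureReal_apply hV (measurableSet_singleton 0), h, poissonMeasure_real_singleton]
  simp

variable {rate : ι → ℝ≥0}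

lemma measureReal_biInter_preimage_zero (hmeas : ∀ i, Measurable (W i)) (hindep : iIndepFun W P)
    (hW : ∀ i, P.map (W i) = poissonMeasure (rate i)) (s : Finset ι) :
    P.real (⋂ i ∈ s, W i ⁻¹' {0}) = exp (-∑ i ∈ s, (rate i : ℝ)) := by
  rw [measureReal_def, hindep.measure_inter_preimage_eq_mul s (sets := fun _ => {0})
      (fun i _ => measurableSet_singleton 0), ENNReal.toReal_prod, ← Finset.sum_neg_distrib,
    Real.exp_sum]
  exact Finset.prod_congr rfl fun i _ =>
    measureReal_preimage_zero_of_map_eq_poissonMeasure (hmeas i) (hW i)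

variable [IsProbabilityMeasure P]

lemma measureReal_occupied (hmeas : ∀ i, Measurable (W i)) (hindep : iIndepFun W P)
    (hW : ∀ i, P.map (W i) = poissonMeasure (rate i)) (s : Finset ι) :
    P.real (occupied W s) = 1 - exp (-∑ i ∈ s, (rate i : ℝ)) := by
  rw [← measureReal_biInter_preimage_zero hmeas hindep hW, ← compl_occupied,
    probReal_compl_eq_one_sub (measurableSet_occupied hmeas s), sub_sub_cancel]

lemma tsum_measure_occupied_ne_top (hmeas : ∀ i, Measurable (W i)) (hindep : iIndepFun W P)
    (hW : ∀ i, P.map (W i) = poissonMeasure (rate i)) {s : ℕ → Finset ι}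
    (hs : Summable fun k => ∑ i ∈ s k, (rate i : ℝ)) :
    ∑' k, P (occupied W (s k)) ≠ ∞ := by
  refine tsum_measure_ne_top_of_summable (hs.of_nonneg_of_le (fun _ => measureReal_nonneg)
    fun k => ?_)
  rw [measureReal_occupied hmeas hindep hW]
  linarith [add_one_le_exp (-∑ i ∈ s k, (rate i : ℝ))]

lemma measureReal_occupied_inter_sub_mul [DecidableEq ι] (hmeas : ∀ i, Measurable (W i))
    (hindep : iIndepFun W P) (hW : ∀ i, P.map (W i) = poissonMeasure (rate i)) (s t : Finset ι) :
    P.real (occupied W s ∩ occupied W t) - P.real (occupied W s) * P.real (occupied W t)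
      = exp (-∑ i ∈ s ∪ t, (rate i : ℝ))
        - exp (-∑ i ∈ s, (rate i : ℝ)) * exp (-∑ i ∈ t, (rate i : ℝ)) := by
  rw [← compl_compl (occupied W s), ← compl_compl (occupied W t),
    measureReal_compl_inter_compl_sub_mul (measurableSet_occupied hmeas s).compl
      (measurableSet_occupied hmeas t).compl,
    compl_occupied, compl_occupied, ← Finset.set_biInter_inter]
  simp only [measureReal_biInter_preimage_zero hmeas hindep hW]

end PoissonCells

lemma summable_one_sub_exp_neg_mul {p : ℕ → ℝ} (hp : ∀ k, 0 ≤ p k) (hs : Summable p) {x : ℝ}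
    (hx : 0 ≤ x) : Summable fun k => 1 - exp (-(p k * x)) :=
  (hs.mul_right x).of_nonneg_of_le
    (fun k => sub_nonneg.2 (exp_le_one_iff.2 (neg_nonpos.2 (mul_nonneg (hp k) hx))))
    (fun k => by linarith [add_one_le_exp (-(p k * x))])

lemma Phi_sub_Phi {p : ℕ → ℝ} (hp : ∀ k, 0 ≤ p k) (hs : Summable p) {x y : ℝ} (hx : 0 ≤ x)
    (hy : 0 ≤ y) : Phi p y - Phi p x = ∑' k, (exp (-(p k * x)) - exp (-(p k * y))) := by
  rw [Phi, Phi, ← (summable_one_sub_exp_neg_mul hp hs hy).tsum_sub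
    (summable_one_sub_exp_neg_mul hp hs hx)]
  congr 1
  ext k
  ring

section Karlin

variable {Ω : Type*} [MeasurableSpace Ω] {P : Measure Ω} {W : ℕ × Fin 3 → Ω → ℕ}
  {p : ℕ → ℝ} {n t τ : ℝ}

def karlinRate (p : ℕ → ℝ) (n t τ : ℝ) (i : ℕ × Fin 3) : ℝ≥0 :=
  (p i.1 * ![1 - τ, t + τ - 1, 1 - t] i.2 * n).toNNReal

lemma map_eq_poissonMeasure_karlinRate
    (hX : ∀ k, P.map (W (k, 0)) = poissonMeasure (p k * (1 - τ) * n).toNNReal)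
    (hY : ∀ k, P.map (W (k, 1)) = poissonMeasure (p k * (t + τ - 1) * n).toNNReal)
    (hZ : ∀ k, P.map (W (k, 2)) = poissonMeasure (p k * (1 - t) * n).toNNReal) (i : ℕ × Fin 3) :
    P.map (W i) = poissonMeasure (karlinRate p n t τ i) := by
  obtain ⟨k, i⟩ := i
  fin_cases i
  exacts [hX k, hY k, hZ k]

lemma coe_karlinRate (hp : ∀ k, 0 ≤ p k) (hn : 0 ≤ n) (ht : t ≤ 1) (hτ : τ ≤ 1)
    (htτ : 1 ≤ t + τ) (k : ℕ) (i : Fin 3) :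
    (karlinRate p n t τ (k, i) : ℝ) = p k * ![1 - τ, t + τ - 1, 1 - t] i * n := by
  refine Real.coe_toNNReal _ (mul_nonneg (mul_nonneg (hp k) ?_) hn)
  fin_cases i <;> simp <;> linarith

variable [IsProbabilityMeasure P]

lemma tsum_measure_occupied_pair_ne_top (hmeas : ∀ i, Measurable (W i)) (hindep : iIndepFun W P)
    (hW : ∀ i, P.map (W i) = poissonMeasure (karlinRate p n t τ i))
    (hrate : ∀ k i, (karlinRate p n t τ (k, i) : ℝ) = p k * ![1 - τ, t + τ - 1, 1 - t] i * n)
    (hps : Summable p) {a b : Fin 3} (hab : a ≠ b) :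
    ∑' k, P (occupied W {(k, a), (k, b)}) ≠ ∞ := by
  refine tsum_measure_occupied_ne_top hmeas hindep hW ?_
  have hsum (k : ℕ) : ∑ i ∈ {(k, a), (k, b)}, (karlinRate p n t τ i : ℝ)
      = p k * ((![1 - τ, t + τ - 1, 1 - t] a + ![1 - τ, t + τ - 1, 1 - t] b) * n) := by
    rw [Finset.sum_pair (by simp [hab]), hrate, hrate]
    ring
  simpa only [hsum] using hps.mul_right _

lemma measureReal_occupied_karlin_inter_sub_mul (hmeas : ∀ i, Measurable (W i))
    (hindep : iIndepFun W P) (hW : ∀ i, P.map (W i) = poissonMeasure (karlinRate p n t τ i))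
    (hrate : ∀ k i, (karlinRate p n t τ (k, i) : ℝ) = p k * ![1 - τ, t + τ - 1, 1 - t] i * n)
    (k : ℕ) :
    P.real (occupied W {(k, 0), (k, 1)} ∩ occupied W {(k, 1), (k, 2)})
        - P.real (occupied W {(k, 0), (k, 1)}) * P.real (occupied W {(k, 1), (k, 2)})
      = exp (-(p k * n)) - exp (-(p k * (t + τ) * n)) := by
  rw [measureReal_occupied_inter_sub_mul hmeas hindep hW, ← exp_add]
  simp [Finset.insert_union, hrate]
  ring_nf

end Karlin

/-- covariance of the forward and backward numbers of non-empty urns in the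
Poissonized Karlin model.  The urns are indexed by `k : ℕ`; for each `k`, `W (k,0)`,
`W (k,1)`, `W (k,2)` are the Poisson numbers of balls in urn `k` thrown during the initial
segment of length `(1-τ)n`, the overlap of length `(t+τ-1)n`, and the final segment of
length `(1-t)n`; all these variables are mutually independent.  Then
`R = ∑_k 1(W(k,0) + W(k,1) ≥ 1)` and `R' = ∑_k 1(W(k,1) + W(k,2) ≥ 1)` are a.s. given by
convergent sums, are square integrable, and
`Cov(R, R') = ∑_k (e^{-p_k n} - e^{-p_k (t+τ) n}) = Φ((t+τ)n) - Φ(n)`. -/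
theorem statement14
    {Ω : Type*} [MeasurableSpace Ω] (P : Measure Ω) [IsProbabilityMeasure P]
    (p : ℕ → ℝ) (hp : ∀ k, 0 ≤ p k) (hsum : ∑' k : ℕ, p k = 1)
    (n : ℝ) (hn : 0 < n)
    (t τ : ℝ) (ht : t ∈ Set.Icc (0 : ℝ) 1) (hτ : τ ∈ Set.Icc (0 : ℝ) 1)
    (htτ : 1 < t + τ)
    (W : ℕ × Fin 3 → Ω → ℕ) (hmeas : ∀ i, Measurable (W i))
    (hindep : iIndepFun W P)
    (hX : ∀ k : ℕ, P.map (W (k, 0)) = poissonMeasure (Real.toNNReal (p k * (1 - τ) * n)))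
    (hY : ∀ k : ℕ, P.map (W (k, 1)) = poissonMeasure (Real.toNNReal (p k * (t + τ - 1) * n)))
    (hZ : ∀ k : ℕ, P.map (W (k, 2)) = poissonMeasure (Real.toNNReal (p k * (1 - t) * n)))
    (R R' : Ω → ℝ)
    (hR : R = fun ω => ∑' k : ℕ, if 1 ≤ W (k, 0) ω + W (k, 1) ω then (1 : ℝ) else 0)
    (hR' : R' = fun ω => ∑' k : ℕ, if 1 ≤ W (k, 1) ω + W (k, 2) ω then (1 : ℝ) else 0) :
    (∀ᵐ ω ∂P,
      Summable (fun k : ℕ => if 1 ≤ W (k, 0) ω + W (k, 1) ω then (1 : ℝ) else 0) ∧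
      Summable (fun k : ℕ => if 1 ≤ W (k, 1) ω + W (k, 2) ω then (1 : ℝ) else 0)) ∧
    MemLp R 2 P ∧ MemLp R' 2 P ∧
    (∫ ω, R ω * R' ω ∂P) - (∫ ω, R ω ∂P) * (∫ ω, R' ω ∂P) =
      ∑' k : ℕ, (Real.exp (-(p k * n)) - Real.exp (-(p k * (t + τ) * n))) ∧
    (∫ ω, R ω * R' ω ∂P) - (∫ ω, R ω ∂P) * (∫ ω, R' ω ∂P) =
      Phi p ((t + τ) * n) - Phi p n := by
  have hps : Summable p := by_contra fun h => by simp [tsum_eq_zero_of_not_summable h] at hsum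
  have hW := map_eq_poissonMeasure_karlinRate hX hY hZ
  have hrate := coe_karlinRate hp hn.le ht.2 hτ.2 htτ.le
  set S : ℕ → Set Ω := fun k => occupied W {(k, 0), (k, 1)}
  set T : ℕ → Set Ω := fun k => occupied W {(k, 1), (k, 2)}
  have hSm (k : ℕ) : MeasurableSet (S k) := measurableSet_occupied hmeas _
  have hTm (k : ℕ) : MeasurableSet (T k) := measurableSet_occupied hmeas _
  have hfS := tsum_measure_occupied_pair_ne_top hmeas hindep hW hrate hps
    (by decide : (0 : Fin 3) ≠ 1)
  have hfT := tsum_measure_occupied_pair_ne_top hmeas hindep hW hrate hps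
    (by decide : (1 : Fin 3) ≠ 2)
  have hSR : R = fun ω => ∑' k, (S k).indicator 1 ω := by simp [hR, S, indicator_occupied_pair]
  have hTR' : R' = fun ω => ∑' k, (T k).indicator 1 ω := by simp [hR', T, indicator_occupied_pair]
  have hcov : (∫ ω, R ω * R' ω ∂P) - (∫ ω, R ω ∂P) * (∫ ω, R' ω ∂P) =
      ∑' k : ℕ, (Real.exp (-(p k * n)) - Real.exp (-(p k * (t + τ) * n))) := by
    rw [hSR, hTR', integral_tsum_indicator_mul_sub_mul hSm hTm hfS hfT
      (measure_occupied_pair_inter_of_ne hmeas hindep 0 1 1 2)]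
    exact tsum_congr (measureReal_occupied_karlin_inter_sub_mul hmeas hindep hW hrate)
  refine ⟨?_, hSR ▸ memLp_two_tsum_indicator hSm hfS
      (measure_occupied_pair_inter_of_ne hmeas hindep 0 1 0 1),
    hTR' ▸ memLp_two_tsum_indicator hTm hfT
      (measure_occupied_pair_inter_of_ne hmeas hindep 1 2 1 2), hcov, ?_⟩
  · filter_upwards [ae_summable_indicator hSm hfS, ae_summable_indicator hTm hfT]
      with ω hSω hTω
    simpa [S, T, indicator_occupied_pair] using And.intro hSω hTω
  · rw [hcov, Phi_sub_Phi hp hps hn.le (by nlinarith)]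
    exact tsum_congr fun k => by ring_nf
end
end
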